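/- arXiv:1004.1821 — 2 statements merged into one kernel-verified Lean document; each statement's English description precedes it below -/
import Mathlib

section
/- Let A be an n×N real matrix satisfying aRIP(2k; L₂, U₂) and aRIP(4k; L₄, U₄) with L₂ < 1. Let x ∈ ℝ^N be k-sparse, let e ∈ ℝⁿ, and set y = Ax + e. Let v ∈ ℝ^N be k-sparse and set r := v − x. Let Ω be an index set with |Ω| = 2k selecting 2k largest-magnitude entries of A*(y − Av). Then ‖r_{Ω^c}‖₂ ≤ ((L₂ + U₂ + L₄ + U₄)/(2(1−L₂)))·‖r‖₂ + (2√(1+U₂)/(1−L₂))·‖e‖₂. -/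
open Finset Matrix

noncomputable def enorm {α : Type*} [Fintype α] (v : α → ℝ) : ℝ :=
  Real.sqrt (∑ i, (v i) ^ 2)

def restr {N : ℕ} (I : Finset (Fin N)) (x : Fin N → ℝ) : Fin N → ℝ :=
  fun i => if i ∈ I then x i else 0

def sparse {N : ℕ} (k : ℕ) (x : Fin N → ℝ) : Prop :=
  (Finset.univ.filter fun i => x i ≠ 0).card ≤ k

def aRIP {n N : ℕ} (A : Matrix (Fin n) (Fin N) ℝ) (m : ℕ) (L U : ℝ) : Prop :=
  ∀ x : Fin N → ℝ, sparse m x →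
    (1 - L) * _root_.enorm x ^ 2 ≤ _root_.enorm (A.mulVec x) ^ 2 ∧
      _root_.enorm (A.mulVec x) ^ 2 ≤ (1 + U) * _root_.enorm x ^ 2

def selects {N : ℕ} (T : Finset (Fin N)) (v : Fin N → ℝ) : Prop :=
  ∀ i ∈ T, ∀ j ∉ T, |v j| ≤ |v i|

def subCols {n N : ℕ} (A : Matrix (Fin n) (Fin N) ℝ) (I : Finset (Fin N)) :
    Matrix (Fin n) I ℝ :=
  fun r c => A r (c : Fin N)

noncomputable def gram {n N : ℕ} (A : Matrix (Fin n) (Fin N) ℝ) (I : Finset (Fin N)) :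
    Matrix I I ℝ :=
  (subCols A I)ᵀ * subCols A I

noncomputable def pinvApply {n N : ℕ} (A : Matrix (Fin n) (Fin N) ℝ) (I : Finset (Fin N))
    (y : Fin n → ℝ) : I → ℝ :=
  ((gram A I)⁻¹ * (subCols A I)ᵀ).mulVec y

noncomputable def pinvVec {n N : ℕ} (A : Matrix (Fin n) (Fin N) ℝ) (I : Finset (Fin N))
    (y : Fin n → ℝ) : Fin N → ℝ :=
  fun i => if h : i ∈ I then pinvApply A I y ⟨i, h⟩ else 0

/-! With `r = v - x` supported on `T` (`#T ≤ 2k`), `u = A*(e - A r)` and `w = r_{Ωᶜ}`, the lower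
RIP bound gives `(1 - L₂)‖w‖² ≤ ‖A w‖² = ⟨e, A w⟩ - ⟨u, w⟩ - ⟨A r_Ω, A w⟩`. The outer terms are
controlled by the upper RIP bound and by RIP-polarization for disjointly supported vectors. Since
`w` lives on `T \ Ω` and `#(T \ Ω) ≤ #(Ω \ T)`, the selection property bounds `‖u_{T \ Ω}‖` by
`‖u_{Ω \ T}‖`, and `‖u_{Ω \ T}‖² = ⟨e - A r, A u_{Ω \ T}⟩` is controlled by the `4k`-RIP. -/

open Function

section EuclideanNorm

variable {α : Type*} [Fintype α]

lemma enorm_nonneg (v : α → ℝ) : 0 ≤ _root_.enorm v :=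
  Real.sqrt_nonneg _

lemma enorm_sq (v : α → ℝ) : _root_.enorm v ^ 2 = v ⬝ᵥ v := by
  rw [_root_.enorm, Real.sq_sqrt (by positivity), dotProduct]
  simp only [sq]

lemma enorm_eq_zero_iff {v : α → ℝ} : _root_.enorm v = 0 ↔ v = 0 := by
  rw [← sq_eq_zero_iff, enorm_sq, dotProduct_self_eq_zero]

lemma abs_dotProduct_le_enorm_mul (v w : α → ℝ) :
    |v ⬝ᵥ w| ≤ _root_.enorm v * _root_.enorm w := by
  rw [_root_.enorm, _root_.enorm, ← Real.sqrt_mul (by positivity)]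
  exact Real.abs_le_sqrt (Finset.sum_mul_sq_le_sq_mul_sq _ v w)

lemma enorm_smul_add_smul_sq (c d : ℝ) (v w : α → ℝ) :
    _root_.enorm (c • v + d • w) ^ 2 =
      c ^ 2 * _root_.enorm v ^ 2 + 2 * c * d * (v ⬝ᵥ w) + d ^ 2 * _root_.enorm w ^ 2 := by
  simp only [enorm_sq, add_dotProduct, dotProduct_add, smul_dotProduct, dotProduct_smul,
    dotProduct_comm w v, smul_eq_mul]
  ring

lemma dotProduct_eq_zero_of_disjoint_support {v w : α → ℝ}
    (h : Disjoint (support v) (support w)) : v ⬝ᵥ w = 0 := by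
  refine Finset.sum_eq_zero fun i _ => ?_
  by_cases hv : v i = 0
  · simp [hv]
  · simp [notMem_support.mp (Set.disjoint_left.mp h hv)]

end EuclideanNorm

lemma mul_le_of_mul_sq_le_mul {a b c : ℝ} (hb : 0 ≤ b) (hc : 0 ≤ c) (h : c * a ^ 2 ≤ a * b) :
    c * a ≤ b := by
  rcases lt_trichotomy a 0 with ha | rfl | ha
  · nlinarith
  · simpa using hb
  · nlinarith

lemma transpose_mulVec_dotProduct {R ι κ : Type*} [CommSemiring R] [Fintype ι] [Fintype κ]
    (A : Matrix ι κ R) (c : ι → R) (z : κ → R) : Aᵀ *ᵥ c ⬝ᵥ z = c ⬝ᵥ A *ᵥ z := by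
  rw [mulVec_transpose, dotProduct_mulVec]

lemma Finset.sum_le_sum_of_forall_le_of_card_le {ι M : Type*} [AddCommMonoid M] [LinearOrder M]
    [IsOrderedAddMonoid M] {f : ι → M} {P S : Finset ι} (hf : ∀ j ∈ S, 0 ≤ f j)
    (hle : ∀ i ∈ P, ∀ j ∈ S, f i ≤ f j) (hcard : #P ≤ #S) : ∑ i ∈ P, f i ≤ ∑ j ∈ S, f j := by
  rcases P.eq_empty_or_nonempty with rfl | hP
  · simpa using Finset.sum_nonneg hf
  have hS : S.Nonempty := Finset.card_pos.mp ((Finset.card_pos.mpr hP).trans_le hcard)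
  calc ∑ i ∈ P, f i ≤ #P • S.inf' hS f :=
        Finset.sum_le_card_nsmul _ _ _ fun i hi => Finset.le_inf' hS _ (hle i hi)
    _ ≤ #S • S.inf' hS f := nsmul_le_nsmul_left (Finset.le_inf' hS _ hf) hcard
    _ ≤ ∑ j ∈ S, f j := Finset.card_nsmul_le_sum _ _ _ fun j hj => Finset.inf'_le f hj

section Restriction

variable {N : ℕ} {I : Finset (Fin N)}

lemma restr_dotProduct (x y : Fin N → ℝ) : restr I x ⬝ᵥ y = ∑ i ∈ I, x i * y i := by
  simp [dotProduct, restr, ite_mul, Finset.sum_ite_mem]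

lemma dotProduct_restr (x y : Fin N → ℝ) : x ⬝ᵥ restr I y = ∑ i ∈ I, x i * y i := by
  simp [dotProduct, restr, mul_ite, Finset.sum_ite_mem]

lemma support_restr (x : Fin N → ℝ) : support (restr I x) = ↑I ∩ support x := by
  ext i
  by_cases hi : i ∈ I <;> simp [restr, hi]

lemma dotProduct_eq_restr_dotProduct {x y : Fin N → ℝ} (h : support y ⊆ I) :
    x ⬝ᵥ y = restr I x ⬝ᵥ y := by
  rw [restr_dotProduct]
  refine (Finset.sum_subset (Finset.subset_univ I) fun i _ hi => ?_).symm
  simp [notMem_support.mp fun hy => hi (h hy)]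

lemma restr_add_restr_compl (x : Fin N → ℝ) : restr I x + restr Iᶜ x = x := by
  ext i
  by_cases hi : i ∈ I <;> simp [restr, hi]

lemma enorm_sq_restr (x : Fin N → ℝ) : _root_.enorm (restr I x) ^ 2 = x ⬝ᵥ restr I x := by
  rw [enorm_sq, restr_dotProduct, dotProduct_restr]
  exact Finset.sum_congr rfl fun i hi => by simp [restr, hi]

lemma enorm_restr_le (x : Fin N → ℝ) : _root_.enorm (restr I x) ≤ _root_.enorm x := by
  refine Real.sqrt_le_sqrt (Finset.sum_le_sum fun i _ => ?_)
  by_cases hi : i ∈ I <;> simp [restr, hi, sq_nonneg]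

lemma selects.enorm_restr_le {Ω P S : Finset (Fin N)} {u : Fin N → ℝ} (h : selects Ω u)
    (hP : Disjoint P Ω) (hS : S ⊆ Ω) (hcard : #P ≤ #S) :
    _root_.enorm (restr P u) ≤ _root_.enorm (restr S u) := by
  refine le_of_pow_le_pow_left₀ two_ne_zero (enorm_nonneg _) ?_
  rw [enorm_sq_restr, enorm_sq_restr, dotProduct_restr, dotProduct_restr]
  refine Finset.sum_le_sum_of_forall_le_of_card_le (fun j _ => mul_self_nonneg _)
    (fun i hi j hj => ?_) hcard
  rw [← abs_mul_abs_self (u i), ← abs_mul_abs_self (u j)]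
  exact mul_self_le_mul_self (abs_nonneg _) (h j (hS hj) i (Finset.disjoint_left.mp hP hi))

end Restriction

section Sparse

variable {N m : ℕ}

lemma sparse_of_support_subset {x : Fin N → ℝ} {I : Finset (Fin N)} (h : support x ⊆ I)
    (hI : #I ≤ m) : sparse m x :=
  (Finset.card_le_card fun i hi => h (by simpa using hi)).trans hI

lemma sparse.exists_support_subset {x : Fin N → ℝ} (h : sparse m x) :
    ∃ T : Finset (Fin N), support x ⊆ T ∧ #T ≤ m :=
  ⟨_, fun i hi => by simpa using hi, h⟩

lemma sparse.sub {l : ℕ} {x y : Fin N → ℝ} (hx : sparse m x) (hy : sparse l y) :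
    sparse (m + l) (x - y) := by
  obtain ⟨I, hxI, hI⟩ := hx.exists_support_subset
  obtain ⟨J, hyJ, hJ⟩ := hy.exists_support_subset
  refine sparse_of_support_subset (I := I ∪ J) ?_ ((Finset.card_union_le I J).trans (by omega))
  exact (support_sub x y).trans (by push_cast; exact Set.union_subset_union hxI hyJ)

end Sparse

section RIP

variable {n N m : ℕ} {A : Matrix (Fin n) (Fin N) ℝ} {L U : ℝ}

lemma aRIP.enorm_mulVec_le (h : aRIP A m L U) {x : Fin N → ℝ} (hx : sparse m x) :
    _root_.enorm (A *ᵥ x) ≤ √(1 + U) * _root_.enorm x :=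
  calc _root_.enorm (A *ᵥ x) = √(_root_.enorm (A *ᵥ x) ^ 2) := (Real.sqrt_sq (enorm_nonneg _)).symm
    _ ≤ √((1 + U) * _root_.enorm x ^ 2) := Real.sqrt_le_sqrt (h x hx).2
    _ = √(1 + U) * _root_.enorm x := by
      rw [Real.sqrt_mul' _ (sq_nonneg _), Real.sqrt_sq (enorm_nonneg x)]

lemma aRIP.dotProduct_mulVec_le (h : aRIP A m L U) (c : Fin n → ℝ) {x : Fin N → ℝ}
    (hx : sparse m x) : c ⬝ᵥ A *ᵥ x ≤ √(1 + U) * _root_.enorm c * _root_.enorm x := by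
  refine (le_abs_self _).trans ((abs_dotProduct_le_enorm_mul _ _).trans ?_)
  rw [mul_comm √(1 + U), mul_assoc]
  exact mul_le_mul_of_nonneg_left (h.enorm_mulVec_le hx) (enorm_nonneg c)

/-- Polarization: apply both RIP bounds to `‖b‖ a ± ‖a‖ b`, which have the same norm because `a`
and `b` are orthogonal. -/
lemma aRIP.abs_dotProduct_mulVec_le (h : aRIP A m L U) {a b : Fin N → ℝ} {I J : Finset (Fin N)}
    (ha : support a ⊆ I) (hb : support b ⊆ J) (hIJ : Disjoint I J) (hm : #I + #J ≤ m) :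
    |A *ᵥ a ⬝ᵥ A *ᵥ b| ≤ (L + U) / 2 * _root_.enorm a * _root_.enorm b := by
  set s := _root_.enorm a
  set q := _root_.enorm b
  set X := A *ᵥ a ⬝ᵥ A *ᵥ b
  have hab : a ⬝ᵥ b = 0 := dotProduct_eq_zero_of_disjoint_support
    (Set.disjoint_of_subset ha hb (Finset.disjoint_coe.mpr hIJ))
  have hsparse (d : ℝ) : sparse m (q • a + d • b) := by
    refine sparse_of_support_subset (I := I ∪ J) ?_ ((Finset.card_union_le I J).trans hm)
    refine (support_add _ _).trans ?_
    push_cast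
    exact Set.union_subset_union ((support_const_smul_subset q a).trans ha)
      ((support_const_smul_subset d b).trans hb)
  have hnorm (d : ℝ) : _root_.enorm (q • a + d • b) ^ 2 = q ^ 2 * s ^ 2 + d ^ 2 * q ^ 2 := by
    rw [enorm_smul_add_smul_sq, hab]
    ring
  have himage (d : ℝ) : _root_.enorm (A *ᵥ (q • a + d • b)) ^ 2 =
      q ^ 2 * _root_.enorm (A *ᵥ a) ^ 2 + 2 * q * d * X + d ^ 2 * _root_.enorm (A *ᵥ b) ^ 2 := by
    rw [mulVec_add, mulVec_smul, mulVec_smul, enorm_smul_add_smul_sq]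
  have hbound (d : ℝ) := h _ (hsparse d)
  simp only [hnorm, himage] at hbound
  have hplus := hbound s
  have hminus := hbound (-s)
  have hqs : 4 * (q * s) * |X| ≤ 2 * (L + U) * (q * s) ^ 2 := by
    rcases abs_cases X with ⟨hX, _⟩ | ⟨hX, _⟩ <;> rw [hX] <;> linarith
  rcases (mul_nonneg (enorm_nonneg b) (enorm_nonneg a)).eq_or_lt with hzero | hpos
  · have : X = 0 := by
      rcases mul_eq_zero.mp hzero.symm with hq | hs
      · simp [X, enorm_eq_zero_iff.mp hq]
      · simp [X, enorm_eq_zero_iff.mp hs]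
    rw [this, abs_zero, mul_assoc, ← mul_comm q, ← hzero, mul_zero]
  · nlinarith

lemma aRIP.enorm_restr_transpose_residual_le (h : aRIP A m L U) {m' : ℕ} {L' U' : ℝ}
    (h' : aRIP A m' L' U') (hLU' : 0 ≤ L' + U') {r : Fin N → ℝ} {T S : Finset (Fin N)}
    (hr : support r ⊆ T) (hTS : Disjoint T S) (hS : #S ≤ m) (hm' : #T + #S ≤ m')
    (e : Fin n → ℝ) :
    _root_.enorm (restr S (Aᵀ *ᵥ (e - A *ᵥ r))) ≤
      (L' + U') / 2 * _root_.enorm r + √(1 + U) * _root_.enorm e := by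
  set z := restr S (Aᵀ *ᵥ (e - A *ᵥ r))
  have hz : support z ⊆ S := (support_restr _).trans_subset Set.inter_subset_left
  have he := h.dotProduct_mulVec_le e (sparse_of_support_subset hz hS)
  have hr' := neg_le_of_abs_le (h'.abs_dotProduct_mulVec_le hr hz hTS hm')
  have hsq : _root_.enorm z ^ 2 = e ⬝ᵥ A *ᵥ z - A *ᵥ r ⬝ᵥ A *ᵥ z := by
    rw [enorm_sq_restr, transpose_mulVec_dotProduct, sub_dotProduct]
  have hbound : 0 ≤ (L' + U') / 2 * _root_.enorm r + √(1 + U) * _root_.enorm e :=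
    add_nonneg (mul_nonneg (by linarith) (enorm_nonneg r))
      (mul_nonneg (Real.sqrt_nonneg _) (enorm_nonneg e))
  simpa using mul_le_of_mul_sq_le_mul hbound zero_le_one (a := _root_.enorm z)
    (by rw [one_mul, hsq]; linarith)

theorem aRIP.enorm_restr_compl_le_of_selects {k : ℕ} {L₂ U₂ L₄ U₄ : ℝ}
    (h₂ : aRIP A (2 * k) L₂ U₂) (h₄ : aRIP A (4 * k) L₄ U₄) (hLU₂ : 0 ≤ L₂ + U₂)
    (hLU₄ : 0 ≤ L₄ + U₄) (hL₂ : L₂ < 1) {r : Fin N → ℝ} (hr : sparse (2 * k) r) (e : Fin n → ℝ)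
    {Ω : Finset (Fin N)} (hΩ : #Ω = 2 * k) (hsel : selects Ω (Aᵀ *ᵥ (e - A *ᵥ r))) :
    _root_.enorm (restr Ωᶜ r) ≤
      ((L₂ + U₂ + L₄ + U₄) / 2 * _root_.enorm r + 2 * √(1 + U₂) * _root_.enorm e) / (1 - L₂) := by
  obtain ⟨T, hrT, hT⟩ := hr.exists_support_subset
  set u := Aᵀ *ᵥ (e - A *ᵥ r)
  set w := restr Ωᶜ r
  have hw : support w ⊆ ↑(T \ Ω) := by
    rw [support_restr, Finset.coe_sdiff, Finset.coe_compl, Set.inter_comm]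
    exact Set.inter_subset_inter_left _ hrT
  have hwT : #(T \ Ω) ≤ 2 * k := (Finset.card_le_card Finset.sdiff_subset).trans hT
  have hcard : #(T \ Ω) ≤ #(Ω \ T) := by
    have := Finset.card_sdiff_add_card_inter T Ω
    have := Finset.card_sdiff_add_card_inter Ω T
    rw [Finset.inter_comm] at this
    omega
  have hΩT : #(Ω \ T) ≤ 2 * k := (Finset.card_le_card Finset.sdiff_subset).trans hΩ.le
  have he := h₂.dotProduct_mulVec_le e (sparse_of_support_subset hw hwT)
  have hu : -(u ⬝ᵥ w) ≤ ((L₄ + U₄) / 2 * _root_.enorm r + √(1 + U₂) * _root_.enorm e) *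
      _root_.enorm w := by
    rw [dotProduct_eq_restr_dotProduct hw]
    refine (neg_le_abs _).trans ((abs_dotProduct_le_enorm_mul _ _).trans ?_)
    refine mul_le_mul_of_nonneg_right ?_ (enorm_nonneg w)
    refine (hsel.enorm_restr_le Finset.sdiff_disjoint Finset.sdiff_subset hcard).trans ?_
    exact h₂.enorm_restr_transpose_residual_le h₄ hLU₄ hrT Finset.disjoint_sdiff hΩT
      (by omega) e
  have hΩw : -(A *ᵥ restr Ω r ⬝ᵥ A *ᵥ w) ≤ (L₂ + U₂) / 2 * _root_.enorm r * _root_.enorm w := by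
    have hrΩ : support (restr Ω r) ⊆ ↑(T ∩ Ω) := by
      rw [support_restr, Finset.coe_inter, Set.inter_comm]
      exact Set.inter_subset_inter_left _ hrT
    have hcardT : #(T ∩ Ω) + #(T \ Ω) ≤ 2 * k := (Finset.card_inter_add_card_sdiff T Ω).trans_le hT
    refine (neg_le_abs _).trans ((h₂.abs_dotProduct_mulVec_le hrΩ hw
      (Finset.disjoint_sdiff_inter T Ω).symm hcardT).trans ?_)
    exact mul_le_mul_of_nonneg_right (mul_le_mul_of_nonneg_left (enorm_restr_le r) (by linarith))
      (enorm_nonneg w)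
  have hAw : _root_.enorm (A *ᵥ w) ^ 2 = e ⬝ᵥ A *ᵥ w - u ⬝ᵥ w - A *ᵥ restr Ω r ⬝ᵥ A *ᵥ w := by
    have hAr : A *ᵥ r = A *ᵥ restr Ω r + A *ᵥ w := by rw [← mulVec_add, restr_add_restr_compl]
    rw [enorm_sq, transpose_mulVec_dotProduct, sub_dotProduct, hAr, add_dotProduct]
    ring
  rw [le_div_iff₀ (sub_pos.mpr hL₂), mul_comm]
  refine mul_le_of_mul_sq_le_mul ?_ (by linarith) ?_
  · exact add_nonneg (mul_nonneg (by linarith) (enorm_nonneg r))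
      (mul_nonneg (by positivity) (enorm_nonneg e))
  · linarith [(h₂ w (sparse_of_support_subset hw hwT)).1]

end RIP

theorem stmt9 {n N k : ℕ} (A : Matrix (Fin n) (Fin N) ℝ)
    (L₂ U₂ L₄ U₄ : ℝ) (hL₂0 : 0 ≤ L₂) (hU₂0 : 0 ≤ U₂) (hL₄0 : 0 ≤ L₄) (hU₄0 : 0 ≤ U₄)
    (h₂ : aRIP A (2 * k) L₂ U₂) (h₄ : aRIP A (4 * k) L₄ U₄) (hL₂1 : L₂ < 1)
    (x : Fin N → ℝ) (hx : sparse k x) (e y : Fin n → ℝ)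
    (hy : y = fun i => A.mulVec x i + e i)
    (v : Fin N → ℝ) (hv : sparse k v)
    (Ω : Finset (Fin N)) (hΩcard : Ω.card = 2 * k)
    (hΩsel : selects Ω (Aᵀ.mulVec (fun i => y i - A.mulVec v i))) :
    _root_.enorm (restr Ωᶜ (fun i => v i - x i)) ≤
      ((L₂ + U₂ + L₄ + U₄) / (2 * (1 - L₂))) * _root_.enorm (fun i => v i - x i)
        + (2 * Real.sqrt (1 + U₂) / (1 - L₂)) * _root_.enorm e := by
  set r : Fin N → ℝ := fun i => v i - x i
  have hr : sparse (2 * k) r := two_mul k ▸ hv.sub hx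
  have hres : (fun i => y i - (A *ᵥ v) i) = e - A *ᵥ r := by
    subst hy
    ext i
    simp only [r, ← Pi.sub_def, mulVec_sub, Pi.sub_apply]
    ring
  rw [hres] at hΩsel
  calc _root_.enorm (restr Ωᶜ r)
      ≤ ((L₂ + U₂ + L₄ + U₄) / 2 * _root_.enorm r + 2 * √(1 + U₂) * _root_.enorm e) / (1 - L₂) :=
        h₂.enorm_restr_compl_le_of_selects h₄ (by linarith) (by linarith) hL₂1 hr e hΩcard hΩsel
    _ = _ := by
      have : 1 - L₂ ≠ 0 := by linarith
      field_simp
end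

section
/- Let x ∈ ℝ^N be k-sparse, let x̃ ∈ ℝ^N be arbitrary, and let T be an index set with |T| = k selecting k largest-magnitude entries of x̃. Then ‖x − x̃_T‖₂ ≤ 2‖x − x̃‖₂. -/
/-!
The restriction `x̃_T` is a best `k`-term approximation of `x̃`: since `x` has at most `|T|`
nonzero entries and `T` carries the largest entries of `x̃`, the mass of `x̃` off `T` is at most
its mass off the support of `x`, which is at most `‖x̃ - x‖`. The triangle inequality then gives
`‖x - x̃_T‖ ≤ ‖x - x̃‖ + ‖x̃ - x̃_T‖ ≤ 2 ‖x - x̃‖`.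
-/

open Finset Matrix

theorem sum_le_sum_of_card_le_of_forall_le {ι M : Type*} [AddCommMonoid M] [LinearOrder M]
    [IsOrderedAddMonoid M] {A B : Finset ι} {f : ι → M} (hcard : A.card ≤ B.card)
    (hle : ∀ a ∈ A, ∀ b ∈ B, f a ≤ f b) (hnonneg : ∀ b ∈ B, 0 ≤ f b) :
    ∑ a ∈ A, f a ≤ ∑ b ∈ B, f b := by
  rcases B.eq_empty_or_nonempty with rfl | hB
  · simp [Finset.card_eq_zero.mp (Nat.le_zero.mp hcard)]
  set c := B.inf' hB f
  calc ∑ a ∈ A, f a ≤ A.card • c :=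
        Finset.sum_le_card_nsmul _ _ _ fun a ha => Finset.le_inf' _ _ fun b hb => hle a ha b hb
    _ ≤ B.card • c := nsmul_le_nsmul_left (Finset.le_inf' _ _ hnonneg) hcard
    _ ≤ ∑ b ∈ B, f b := Finset.card_nsmul_le_sum _ _ _ fun b hb => Finset.inf'_le _ hb

theorem sum_sq_le_sum_sq_of_selects {N : ℕ} {S T : Finset (Fin N)} {v : Fin N → ℝ}
    (hcard : S.card ≤ T.card) (hT : selects T v) :
    ∑ i ∈ S, v i ^ 2 ≤ ∑ i ∈ T, v i ^ 2 := by
  rw [← Finset.sum_inter_add_sum_sdiff S T, ← Finset.sum_inter_add_sum_sdiff T S,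
    Finset.inter_comm]
  gcongr 1
  refine sum_le_sum_of_card_le_of_forall_le ?_ ?_ fun _ _ => sq_nonneg _
  · have := Finset.card_inter_add_card_sdiff S T
    have := Finset.card_inter_add_card_sdiff T S
    rw [Finset.inter_comm] at this
    omega
  · intro a ha b hb
    exact sq_le_sq.mpr (hT b (Finset.mem_sdiff.mp hb).1 a (Finset.mem_sdiff.mp ha).2)

theorem sum_sq_compl_le_of_selects {N : ℕ} {S T : Finset (Fin N)} {v : Fin N → ℝ}
    (hcard : S.card ≤ T.card) (hT : selects T v) :
    ∑ i ∈ Tᶜ, v i ^ 2 ≤ ∑ i ∈ Sᶜ, v i ^ 2 := by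
  have := sum_sq_le_sum_sq_of_selects hcard hT
  have := Finset.sum_compl_add_sum S fun i => v i ^ 2
  have := Finset.sum_compl_add_sum T fun i => v i ^ 2
  linarith

theorem enorm_sub_restr {N : ℕ} (T : Finset (Fin N)) (v : Fin N → ℝ) :
    _root_.enorm (v - restr T v) = Real.sqrt (∑ i ∈ Tᶜ, v i ^ 2) := by
  have hout : ∀ i ∈ Tᶜ, (v - restr T v) i ^ 2 = v i ^ 2 := fun i hi => by
    simp [restr, Finset.mem_compl.mp hi]
  have hin : ∀ i ∈ T, (v - restr T v) i ^ 2 = 0 := fun i hi => by simp [restr, hi]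
  rw [_root_.enorm, ← Finset.sum_compl_add_sum T, Finset.sum_congr rfl hout,
    Finset.sum_eq_zero hin, add_zero]

theorem sqrt_sum_sq_compl_support_le_enorm_sub {N : ℕ} (v x : Fin N → ℝ) :
    Real.sqrt (∑ i ∈ (Finset.univ.filter fun i => x i ≠ 0)ᶜ, v i ^ 2) ≤
      _root_.enorm (v - x) := by
  refine Real.sqrt_le_sqrt ?_
  calc ∑ i ∈ (Finset.univ.filter fun i => x i ≠ 0)ᶜ, v i ^ 2
        = ∑ i ∈ (Finset.univ.filter fun i => x i ≠ 0)ᶜ, (v - x) i ^ 2 :=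
          Finset.sum_congr rfl fun i hi => by simp_all
    _ ≤ ∑ i, (v - x) i ^ 2 :=
          Finset.sum_le_sum_of_subset_of_nonneg (Finset.subset_univ _) fun _ _ _ => sq_nonneg _

theorem enorm_sub_restr_le_of_sparse {N k : ℕ} {x v : Fin N → ℝ} {T : Finset (Fin N)}
    (hx : sparse k x) (hk : k ≤ T.card) (hT : selects T v) :
    _root_.enorm (v - restr T v) ≤ _root_.enorm (v - x) := by
  rw [enorm_sub_restr]
  exact (Real.sqrt_le_sqrt (sum_sq_compl_le_of_selects (hx.trans hk) hT)).trans
    (sqrt_sum_sq_compl_support_le_enorm_sub v x)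

theorem enorm_sub_eq_dist {N : ℕ} (u v : Fin N → ℝ) :
    _root_.enorm (u - v) = dist (WithLp.toLp 2 u) (WithLp.toLp 2 v) := by
  simp [_root_.enorm, EuclideanSpace.dist_eq, Real.dist_eq, sq_abs]

theorem enorm_sub_triangle {N : ℕ} (u v w : Fin N → ℝ) :
    _root_.enorm (u - w) ≤ _root_.enorm (u - v) + _root_.enorm (v - w) := by
  simpa only [enorm_sub_eq_dist] using dist_triangle _ _ _

theorem enorm_sub_comm {N : ℕ} (u v : Fin N → ℝ) :
    _root_.enorm (u - v) = _root_.enorm (v - u) := by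
  simp only [enorm_sub_eq_dist, dist_comm]

theorem stmt12 {N k : ℕ} (x : Fin N → ℝ) (hx : sparse k x)
    (xt : Fin N → ℝ) (T : Finset (Fin N)) (hTcard : T.card = k) (hTsel : selects T xt) :
    _root_.enorm (fun i => x i - restr T xt i) ≤ 2 * _root_.enorm (fun i => x i - xt i) := by
  calc _root_.enorm (x - restr T xt)
      ≤ _root_.enorm (x - xt) + _root_.enorm (xt - restr T xt) := enorm_sub_triangle _ _ _
    _ ≤ _root_.enorm (x - xt) + _root_.enorm (xt - x) := by
        gcongr
        exact enorm_sub_restr_le_of_sparse hx hTcard.ge hTsel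
    _ = 2 * _root_.enorm (x - xt) := by rw [enorm_sub_comm xt x]; ring
end
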